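/- arXiv:1805.06305 — 2 statements merged into one kernel-verified Lean document; each statement's English description precedes it below -/
import Mathlib

section
/- For G = ℤ/Nℤ and σ the class of an integer k, the representation ring of Λ_G(σ) = (ℤ × ℝ)/(ℤ(N,0) + ℤ(k,1)) is isomorphic to ℤ[q^{±1}, x_k]/(x_k^N - q^k), where x_k is the character [a, t] ↦ e^{2πi(kt - a)/N} and q is pulled back along π([a,t]) = e^{2πit}. -/
/-!
A continuous character `χ` of `Λ = (ℤ × ℝ) / ⟨(N, 0), (k, 1)⟩` is determined by `z = χ [1, 0]`
and by its restriction to `ℝ`. That restriction lifts through the covering map `Circle.exp` to a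
continuous additive map `ℝ → ℝ`, so it is `t ↦ exp (i c t)`. The relations `z ^ N = 1` and
`z ^ k exp (i c) = 1` then force `χ = x_k ^ m q ^ j`, and evaluating shows that `x_k ^ m q ^ j = 1`
exactly when `(m, j) ∈ ℤ (N, -k)`. Hence the character group is the abelian group
`⟨x, q | x ^ N = q ^ k⟩`, whose integral group ring is `ℤ[q^{±1}][X] / (X ^ N - q ^ k)`:
`X` is a unit there, with inverse `X ^ (N - 1) q ^ (-k)`, so the maps `x ↦ X`, `q ↦ q` and
back are mutually inverse ring homomorphisms.
-/

noncomputable section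

def contChars (M : Type*) [Group M] [TopologicalSpace M] : Subgroup (M →* Circle) where
  carrier := {χ | Continuous χ}
  one_mem' := by
    show Continuous fun x : M => (1 : M →* Circle) x
    simpa using (continuous_const : Continuous fun _ : M => (1 : Circle))
  mul_mem' := by
    intro a b ha hb
    show Continuous fun x : M => (a * b) x
    simp only [MonoidHom.mul_apply]
    exact ha.mul hb
  inv_mem' := by
    intro a ha
    show Continuous fun x : M => a⁻¹ x
    simp only [MonoidHom.inv_apply]
    exact ha.inv

/-- The "representation ring" of an abelian compact group, modelled as the group ring of
its group of continuous characters. -/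
abbrev RepRing (M : Type*) [Group M] [TopologicalSpace M] : Type _ :=
  MonoidAlgebra ℤ (contChars M)

/-- The ideal `(x^N - q^k)` in `ℤ[q^{±1}][x]`. -/
abbrev relIdeal (N : ℕ) (k : ℤ) : Ideal (Polynomial (LaurentPolynomial ℤ)) :=
  Ideal.span {(Polynomial.X : Polynomial (LaurentPolynomial ℤ)) ^ N -
    Polynomial.C (LaurentPolynomial.T k)}

/-- `Λ_{ℤ/Nℤ}(σ) = (ℤ × ℝ)/(ℤ(N,0) + ℤ(k,1))`. -/
abbrev LamZN (N : ℕ) (k : ℤ) : Type :=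
  (ℤ × ℝ) ⧸ (AddSubgroup.closure {((N : ℤ), (0 : ℝ)), (k, (1 : ℝ))})

open Real

theorem AddChar.exists_eq_circleExp_mul (ψ : AddChar ℝ Circle) (hψ : Continuous ψ) :
    ∃ c : ℝ, ∀ t, ψ t = Circle.exp (c * t) := by
  obtain ⟨F, ⟨-, hFψ⟩, hF_unique⟩ :=
    Circle.isCoveringMap_exp.existsUnique_continuousMap_lifts ⟨ψ, hψ⟩ 0 0 (by simp)
  have hF : ∀ t, Circle.exp (F t) = ψ t := fun t => congrFun hFψ t
  -- translating a lift of `ψ` gives another lift with value `0` at `0`, hence `F` itself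
  have hadd : ∀ s t, F (s + t) = F s + F t := fun s t => by
    have hshift : (⟨fun u => F (s + u) - F s, by fun_prop⟩ : C(ℝ, ℝ)) = F :=
      hF_unique _ ⟨by simp, funext fun u => by simp [Circle.exp_sub, hF, AddChar.map_add_eq_mul]⟩
    have := DFunLike.congr_fun hshift t
    dsimp only [ContinuousMap.coe_mk] at this
    linarith
  let Fhom : ℝ →+ ℝ := AddMonoidHom.mk' F hadd
  refine ⟨F 1, fun t => ?_⟩
  have := map_real_smul Fhom F.continuous t 1
  simp only [smul_eq_mul, mul_one] at this
  rw [← hF, mul_comm]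
  exact congrArg _ this

theorem Circle.eq_zero_of_forall_exp_mul_eq_one {c : ℝ} (h : ∀ t, Circle.exp (c * t) = 1) :
    c = 0 := by
  by_contra hc
  apply Circle.exp_pi_ne_one
  simpa [mul_div_cancel₀ _ hc] using h (π / c)

open Polynomial
open LaurentPolynomial (T)
open scoped LaurentPolynomial

theorem MonoidAlgebra.mapDomainRingEquiv_of {R M M' : Type*} [Semiring R] [Monoid M] [Monoid M']
    (e : M ≃* M') (m : M) :
    mapDomainRingEquiv R e (of R M m) = of R M' (e m) := by
  simp only [of_apply, mapDomainRingEquiv_single]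

theorem LaurentPolynomial.ringHom_ext {R S : Type*} [CommSemiring R] [Semiring S]
    {f g : R[T;T⁻¹] →+* S} (hC : f.comp LaurentPolynomial.C = g.comp LaurentPolynomial.C)
    (hT : f (T 1) = g (T 1)) : f = g := by
  refine IsLocalization.ringHom_ext (Submonoid.powers (X : R[X]))
    (Polynomial.ringHom_ext (fun a => ?_) ?_) <;>
  simp only [RingHom.coe_comp, Function.comp_apply, algebraMap_eq_toLaurent,
    Polynomial.toLaurent_C, toLaurent_X]
  · exact RingHom.congr_fun hC a
  · exact hT

/-- The additive group `ℤ² / ℤ(N, -k)`; multiplicatively it is the abelian group generated by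
`x = (1, 0)` and `q = (0, 1)` subject to `x ^ N = q ^ k`. -/
abbrev RelGroup (N : ℕ) (k : ℤ) : Type := (ℤ × ℤ) ⧸ AddSubgroup.zmultiples ((N : ℤ), -k)

namespace RelGroup

variable {N : ℕ} {k : ℤ}

def x : Multiplicative (RelGroup N k) := .ofAdd (QuotientAddGroup.mk (1, 0))

def q : Multiplicative (RelGroup N k) := .ofAdd (QuotientAddGroup.mk (0, 1))

theorem zpow_x_mul_zpow_q (m j : ℤ) :
    (x : Multiplicative (RelGroup N k)) ^ m * q ^ j = .ofAdd (QuotientAddGroup.mk (m, j)) := by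
  simp only [x, q, ← ofAdd_zsmul, ← ofAdd_add, ← QuotientAddGroup.mk_zsmul,
    ← QuotientAddGroup.mk_add, Prod.smul_mk, smul_eq_mul, mul_one, mul_zero, Prod.mk_add_mk,
    add_zero, zero_add]

theorem exists_eq_zpow_x_mul_zpow_q (g : Multiplicative (RelGroup N k)) :
    ∃ m j : ℤ, g = x ^ m * q ^ j := by
  obtain ⟨⟨m, j⟩, hg⟩ := QuotientAddGroup.mk_surjective g.toAdd
  exact ⟨m, j, by rw [zpow_x_mul_zpow_q, hg]; rfl⟩

theorem x_zpow_eq : (x : Multiplicative (RelGroup N k)) ^ (N : ℤ) = q ^ k := by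
  rw [← mul_inv_eq_one, ← zpow_neg, zpow_x_mul_zpow_q, ← ofAdd_zero, EmbeddingLike.apply_eq_iff_eq,
    QuotientAddGroup.eq_zero_iff]
  exact AddSubgroup.mem_zmultiples _

theorem x_pow_eq : (x : Multiplicative (RelGroup N k)) ^ N = q ^ k := by
  rw [← x_zpow_eq, zpow_natCast]

def lift {W : Type*} [CommGroup W] (x' q' : W) (h : x' ^ (N : ℤ) = q' ^ k) :
    Multiplicative (RelGroup N k) →* W :=
  AddMonoidHom.toMultiplicativeLeft <| QuotientAddGroup.lift _
    ((zmultiplesHom _ (Additive.ofMul x')).coprod (zmultiplesHom _ (Additive.ofMul q')))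
    (by
      rw [AddSubgroup.zmultiples_le, AddMonoidHom.mem_ker, AddMonoidHom.coprod_apply,
        zmultiplesHom_apply, zmultiplesHom_apply, ← ofMul_zpow, ← ofMul_zpow, ← ofMul_mul, h,
        zpow_neg, mul_inv_cancel, ofMul_one])

@[simp]
theorem lift_x {W : Type*} [CommGroup W] (x' q' : W) (h : x' ^ (N : ℤ) = q' ^ k) :
    lift x' q' h x = x' := by
  simp [lift, x]

@[simp]
theorem lift_q {W : Type*} [CommGroup W] (x' q' : W) (h : x' ^ (N : ℤ) = q' ^ k) :
    lift x' q' h q = q' := by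
  simp [lift, q]

theorem hom_ext {M : Type*} [Monoid M] {f g : Multiplicative (RelGroup N k) →* M}
    (hx : f x = g x) (hq : f q = g q) : f = g := by
  have hunits : f.toHomUnits = g.toHomUnits := by
    refine MonoidHom.ext fun a => ?_
    obtain ⟨m, j, rfl⟩ := exists_eq_zpow_x_mul_zpow_q a
    simp only [map_mul, map_zpow]
    congr 2 <;> ext <;> assumption
  refine MonoidHom.ext fun a => ?_
  exact congrArg (fun φ : Multiplicative (RelGroup N k) →* Mˣ => (φ a : M)) hunits

end RelGroup

abbrev RelRing (N : ℕ) (k : ℤ) : Type := ℤ[T;T⁻¹][X] ⧸ relIdeal N k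

namespace RelRing

variable (N : ℕ) (k : ℤ)

def unitQ : (RelRing N k)ˣ :=
  Units.map ((Ideal.Quotient.mk _).comp C).toMonoidHom
    ((AddMonoidAlgebra.of ℤ ℤ).toHomUnits (.ofAdd 1))

theorem val_unitQ_zpow (s : ℤ) :
    ((unitQ N k ^ s : (RelRing N k)ˣ) : RelRing N k) =
      Ideal.Quotient.mk (relIdeal N k) (C (T s)) := by
  rw [unitQ, ← map_zpow, ← map_zpow, ← ofAdd_zsmul, smul_eq_mul, mul_one]
  rfl

theorem mk_X_pow :
    Ideal.Quotient.mk (relIdeal N k) X ^ N = Ideal.Quotient.mk (relIdeal N k) (C (T k)) := by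
  rw [← map_pow, Ideal.Quotient.mk_eq_mk_iff_sub_mem]
  exact Ideal.subset_span rfl

variable {N}

theorem mk_X_mul_eq_one (hN : 0 < N) :
    Ideal.Quotient.mk (relIdeal N k) X *
      (Ideal.Quotient.mk (relIdeal N k) X ^ (N - 1) *
        ((unitQ N k ^ (-k) : (RelRing N k)ˣ) : RelRing N k)) = 1 := by
  rw [← mul_assoc, ← pow_succ', Nat.sub_add_cancel hN, mk_X_pow, ← val_unitQ_zpow,
    ← Units.val_mul, ← zpow_add, add_neg_cancel, zpow_zero, Units.val_one]

def unitX (hN : 0 < N) : (RelRing N k)ˣ where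
  val := Ideal.Quotient.mk (relIdeal N k) X
  inv := Ideal.Quotient.mk (relIdeal N k) X ^ (N - 1) *
    ((unitQ N k ^ (-k) : (RelRing N k)ˣ) : RelRing N k)
  val_inv := mk_X_mul_eq_one k hN
  inv_val := by rw [← mk_X_mul_eq_one k hN]; ring

theorem val_unitX (hN : 0 < N) :
    ((unitX k hN : (RelRing N k)ˣ) : RelRing N k) = Ideal.Quotient.mk _ X :=
  rfl

-- Instance search misses this: the `Monoid` structures on the quotient coming from
-- `Ideal.Quotient.ring` and `Ideal.Quotient.commRing` only agree after unfolding instances.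
instance : CommGroup (RelRing N k)ˣ := Units.instCommGroupUnits (α := RelRing N k)

theorem unitX_zpow (hN : 0 < N) : unitX k hN ^ (N : ℤ) = unitQ N k ^ k := by
  ext
  rw [zpow_natCast, Units.val_pow_eq_pow_val, val_unitX, mk_X_pow, val_unitQ_zpow]

end RelRing

namespace RelGroup

open RelRing

variable {N : ℕ} {k : ℤ}

def toRelRing (hN : 0 < N) : MonoidAlgebra ℤ (Multiplicative (RelGroup N k)) →+* RelRing N k :=
  (MonoidAlgebra.lift ℤ (RelRing N k) _
    ((Units.coeHom _).comp (lift (unitX k hN) (unitQ N k) (unitX_zpow k hN)))).toRingHom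

theorem toRelRing_of (hN : 0 < N) (g : Multiplicative (RelGroup N k)) :
    toRelRing hN (MonoidAlgebra.of ℤ _ g) = lift (unitX k hN) (unitQ N k) (unitX_zpow k hN) g :=
  MonoidAlgebra.lift_of _ g

variable (N k) in
def evalXQ : ℤ[T;T⁻¹][X] →+* MonoidAlgebra ℤ (Multiplicative (RelGroup N k)) :=
  eval₂RingHom (LaurentPolynomial.eval₂ (Int.castRingHom _) ((MonoidAlgebra.of ℤ _).toHomUnits q))
    (MonoidAlgebra.of ℤ _ x)

theorem evalXQ_eq_zero_of_mem (a : ℤ[T;T⁻¹][X]) (ha : a ∈ relIdeal N k) :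
    evalXQ N k a = 0 := by
  obtain ⟨c, rfl⟩ := Ideal.mem_span_singleton'.mp ha
  simp [evalXQ, ← map_zpow, x_pow_eq]

def ofRelRing : RelRing N k →+* MonoidAlgebra ℤ (Multiplicative (RelGroup N k)) :=
  Ideal.Quotient.lift _ (evalXQ N k) evalXQ_eq_zero_of_mem

theorem ofRelRing_mk_X :
    ofRelRing (Ideal.Quotient.mk (relIdeal N k) X) = MonoidAlgebra.of ℤ _ x := by
  simp [ofRelRing, evalXQ]

theorem ofRelRing_mk_C_T (s : ℤ) :
    ofRelRing (Ideal.Quotient.mk (relIdeal N k) (C (T s))) = MonoidAlgebra.of ℤ _ (q ^ s) := by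
  simp [ofRelRing, evalXQ, ← map_zpow]

theorem toRelRing_of_x (hN : 0 < N) :
    toRelRing hN (MonoidAlgebra.of ℤ _ x) = Ideal.Quotient.mk (relIdeal N k) X := by
  rw [toRelRing_of, lift_x, val_unitX]

theorem toRelRing_of_q (hN : 0 < N) :
    toRelRing hN (MonoidAlgebra.of ℤ _ q) = Ideal.Quotient.mk (relIdeal N k) (C (T 1)) := by
  rw [toRelRing_of, lift_q, ← val_unitQ_zpow, zpow_one]

theorem toRelRing_comp_ofRelRing (hN : 0 < N) :
    (toRelRing hN).comp ofRelRing = RingHom.id (RelRing N k) := by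
  refine Ideal.Quotient.ringHom_ext <| Polynomial.ringHom_ext (fun a => ?_) ?_
  · refine RingHom.congr_fun
      (f := (toRelRing hN).comp (ofRelRing.comp ((Ideal.Quotient.mk _).comp C)))
      (g := (Ideal.Quotient.mk _).comp C) (LaurentPolynomial.ringHom_ext (RingHom.ext_int _ _) ?_) a
    simp only [RingHom.comp_apply, ofRelRing_mk_C_T, zpow_one, toRelRing_of_q]
  · simp only [RingHom.comp_apply, ofRelRing_mk_X, toRelRing_of_x, RingHom.id_apply]

theorem ofRelRing_comp_toRelRing (hN : 0 < N) :
    ofRelRing.comp (toRelRing hN) =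
      RingHom.id (MonoidAlgebra ℤ (Multiplicative (RelGroup N k))) := by
  refine MonoidAlgebra.ringHom_ext' (RingHom.ext_int _ _) (hom_ext ?_ ?_)
  · change ofRelRing (toRelRing hN (MonoidAlgebra.of ℤ _ x)) = MonoidAlgebra.of ℤ _ x
    rw [toRelRing_of_x, ofRelRing_mk_X]
  · change ofRelRing (toRelRing hN (MonoidAlgebra.of ℤ _ q)) = MonoidAlgebra.of ℤ _ q
    rw [toRelRing_of_q, ofRelRing_mk_C_T, zpow_one]

def groupRingEquiv (hN : 0 < N) :
    MonoidAlgebra ℤ (Multiplicative (RelGroup N k)) ≃+* RelRing N k :=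
  .ofRingHom (toRelRing hN) ofRelRing (toRelRing_comp_ofRelRing hN) (ofRelRing_comp_toRelRing hN)

theorem groupRingEquiv_of_x (hN : 0 < N) :
    groupRingEquiv hN (MonoidAlgebra.of ℤ _ x) = Ideal.Quotient.mk (relIdeal N k) X :=
  toRelRing_of_x hN

theorem groupRingEquiv_of_q (hN : 0 < N) :
    groupRingEquiv hN (MonoidAlgebra.of ℤ _ q) = Ideal.Quotient.mk (relIdeal N k) (C (T 1)) :=
  toRelRing_of_q hN

end RelGroup

namespace LamZN

variable {N : ℕ} {k : ℤ}

def mk (a : ℤ) (t : ℝ) : Multiplicative (LamZN N k) := .ofAdd (QuotientAddGroup.mk (a, t))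

theorem mk_mul_mk (a b : ℤ) (s t : ℝ) :
    (mk a s * mk b t : Multiplicative (LamZN N k)) = mk (a + b) (s + t) :=
  rfl

theorem mk_eq_zpow_mul (a : ℤ) (t : ℝ) :
    (mk a t : Multiplicative (LamZN N k)) = mk 1 0 ^ a * mk 0 t := by
  simp only [mk, ← ofAdd_zsmul, ← ofAdd_add, ← QuotientAddGroup.mk_zsmul,
    ← QuotientAddGroup.mk_add, Prod.smul_mk, smul_eq_mul, mul_one, smul_zero, Prod.mk_add_mk,
    add_zero, zero_add]

theorem mk_natCast_zero : (mk N 0 : Multiplicative (LamZN N k)) = 1 := by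
  rw [mk, ← ofAdd_zero, EmbeddingLike.apply_eq_iff_eq, QuotientAddGroup.eq_zero_iff]
  exact AddSubgroup.subset_closure (by simp)

theorem mk_self_one : (mk k 1 : Multiplicative (LamZN N k)) = 1 := by
  rw [mk, ← ofAdd_zero, EmbeddingLike.apply_eq_iff_eq, QuotientAddGroup.eq_zero_iff]
  exact AddSubgroup.subset_closure (by simp)

theorem contChars_ext {χ ψ : contChars (Multiplicative (LamZN N k))}
    (h : ∀ a t, (χ : Multiplicative (LamZN N k) →* Circle) (mk a t) =
      (ψ : Multiplicative (LamZN N k) →* Circle) (mk a t)) : χ = ψ := by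
  refine Subtype.ext <| MonoidHom.ext fun g => ?_
  obtain ⟨⟨a, t⟩, hg⟩ := QuotientAddGroup.mk_surjective g.toAdd
  rw [← ofAdd_toAdd g, ← hg]
  exact h a t

def charOf (α β : ℝ) (hN : Circle.exp (N * β) = 1) (hk : Circle.exp (k * β + α) = 1) :
    contChars (Multiplicative (LamZN N k)) :=
  ⟨AddMonoidHom.toMultiplicativeLeft <| QuotientAddGroup.lift _
      { toFun := fun p => .ofMul (Circle.exp (p.1 * β + α * p.2))
        map_zero' := by simp
        map_add' := fun p p' => by
          rw [← ofMul_mul, ← Circle.exp_add, Prod.fst_add, Prod.snd_add]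
          push_cast
          ring_nf }
      (by
        rw [AddSubgroup.closure_le, Set.insert_subset_iff, Set.singleton_subset_iff]
        simp only [SetLike.mem_coe, AddMonoidHom.mem_ker, AddMonoidHom.coe_mk, ZeroHom.coe_mk,
          Int.cast_natCast, mul_zero, add_zero, mul_one, hN, hk, ofMul_one, and_self]),
    continuous_coinduced_dom.mpr <| Circle.exp.continuous.comp (by fun_prop)⟩

theorem charOf_apply (α β : ℝ) (hN : Circle.exp (N * β) = 1) (hk : Circle.exp (k * β + α) = 1)
    (a : ℤ) (t : ℝ) :
    (charOf α β hN hk : Multiplicative (LamZN N k) →* Circle) (mk a t) =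
      Circle.exp (a * β + α * t) :=
  rfl

variable (N k) in
def xk : contChars (Multiplicative (LamZN N k)) :=
  charOf (2 * π * k / N) (-(2 * π) / N)
    (by
      rcases eq_or_ne N 0 with rfl | hN
      · simp
      · rw [mul_div_cancel₀ _ (Nat.cast_ne_zero.2 hN), Circle.exp_neg, Circle.exp_two_pi, inv_one])
    (by rw [← Circle.exp_zero]; congr 1; ring)

variable (N k) in
def q : contChars (Multiplicative (LamZN N k)) :=
  charOf (2 * π) 0 (by simp) (by simp)

theorem xk_apply (a : ℤ) (t : ℝ) :
    (xk N k : Multiplicative (LamZN N k) →* Circle) (mk a t) =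
      Circle.exp (2 * π * (k * t - a) / N) := by
  rw [xk, charOf_apply]
  congr 1
  ring

theorem q_apply (a : ℤ) (t : ℝ) :
    (q N k : Multiplicative (LamZN N k) →* Circle) (mk a t) = Circle.exp (2 * π * t) := by
  rw [q, charOf_apply]
  congr 1
  ring

theorem zpow_xk_mul_zpow_q_apply (m j a : ℤ) (t : ℝ) :
    ((xk N k ^ m * q N k ^ j : contChars (Multiplicative (LamZN N k))) :
        Multiplicative (LamZN N k) →* Circle) (mk a t) =
      Circle.exp (m * (2 * π * (k * t - a) / N) + j * (2 * π * t)) := by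
  simp only [Subgroup.coe_mul, Subgroup.coe_zpow, MonoidHom.mul_apply, MonoidHom.zpow_apply,
    xk_apply, q_apply, Circle.exp_add, Circle.exp_intCast_mul]

theorem xk_pow (hN : 0 < N) : xk N k ^ N = q N k ^ k := by
  refine contChars_ext fun a t => ?_
  simp only [Subgroup.coe_pow, Subgroup.coe_zpow, MonoidHom.pow_apply, MonoidHom.zpow_apply,
    xk_apply, q_apply, ← Circle.exp_natCast_mul, ← Circle.exp_intCast_mul, Circle.exp_eq_exp]
  refine ⟨-a, ?_⟩
  field_simp
  push_cast
  ring

theorem exists_eq_zpow_xk_mul_zpow_q (hN : 0 < N)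
    (χ : contChars (Multiplicative (LamZN N k))) :
    ∃ m j : ℤ, χ = xk N k ^ m * q N k ^ j := by
  let ψ : AddChar ℝ Circle :=
    { toFun := fun t => (χ : Multiplicative (LamZN N k) →* Circle) (mk 0 t)
      map_zero_eq_one' := map_one _
      map_add_eq_mul' := fun s t => by rw [← map_mul, mk_mul_mk, add_zero] }
  have hψ : Continuous ψ :=
    χ.2.comp (continuous_quotient_mk'.comp (Continuous.prodMk_right 0))
  obtain ⟨c, hc⟩ := ψ.exists_eq_circleExp_mul hψ
  obtain ⟨θ, hθ⟩ := Circle.exp_surjective ((χ : Multiplicative (LamZN N k) →* Circle) (mk 1 0))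
  have hχ : ∀ a t, (χ : Multiplicative (LamZN N k) →* Circle) (mk a t) =
      Circle.exp (a * θ + c * t) := fun a t => by
    rw [mk_eq_zpow_mul, map_mul, map_zpow, ← hθ, Circle.exp_add, Circle.exp_intCast_mul]
    exact congrArg _ (hc t)
  obtain ⟨n, hn⟩ : ∃ n : ℤ, ((N : ℤ) : ℝ) * θ = n * (2 * π) := by
    rw [← Circle.exp_eq_one, ← add_zero (_ * θ), ← mul_zero c, ← hχ, mk_natCast_zero, map_one]
  obtain ⟨j, hj⟩ : ∃ j : ℤ, k * θ + c = j * (2 * π) := by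
    rw [← Circle.exp_eq_one, ← mul_one c, ← hχ, mk_self_one, map_one]
  refine ⟨-n, j, contChars_ext fun a t => ?_⟩
  rw [hχ, zpow_xk_mul_zpow_q_apply, show c = j * (2 * π) - k * θ by linarith,
    show θ = n * (2 * π) / N by field_simp; push_cast at hn; linarith]
  congr 1
  field_simp
  push_cast
  ring

theorem mem_zmultiples_of_zpow_xk_mul_zpow_q_eq_one (hN : 0 < N) {m j : ℤ}
    (h : xk N k ^ m * q N k ^ j = 1) : (m, j) ∈ AddSubgroup.zmultiples ((N : ℤ), -k) := by
  have hN' : (N : ℝ) ≠ 0 := by positivity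
  have h1 : ∀ (a : ℤ) (t : ℝ),
      Circle.exp (m * (2 * π * (k * t - a) / N) + j * (2 * π * t)) = 1 := by
    intro a t
    rw [← zpow_xk_mul_zpow_q_apply, h]
    rfl
  obtain ⟨n, hn⟩ : ∃ n : ℤ, m / N * (2 * π) = n * (2 * π) := by
    rw [← Circle.exp_eq_one, ← h1 (-1) 0]
    congr 1
    push_cast
    ring
  have hm : m = N * n := by
    have := mul_right_cancel₀ (by positivity) hn
    field_simp at this
    exact_mod_cast this
  have hj : 2 * π * (m * k / N + j) = 0 :=
    Circle.eq_zero_of_forall_exp_mul_eq_one fun t => by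
      rw [← h1 0 t]
      congr 1
      push_cast
      ring
  have hj' : j = -(n * k) := by
    have h0 : (m : ℝ) * k / N + j = 0 := (mul_eq_zero.1 hj).resolve_left (by positivity)
    rw [hm, Int.cast_mul, Int.cast_natCast, mul_assoc, mul_div_cancel_left₀ _ hN'] at h0
    have : (j : ℝ) = -(n * k) := by linarith
    exact_mod_cast this
  exact ⟨n, by simp [hm, hj', mul_comm]⟩

def ofRelGroup (hN : 0 < N) :
    Multiplicative (RelGroup N k) →* contChars (Multiplicative (LamZN N k)) :=
  RelGroup.lift (xk N k) (q N k) (by rw [zpow_natCast, xk_pow hN])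

theorem ofRelGroup_x (hN : 0 < N) : ofRelGroup hN RelGroup.x = xk N k :=
  RelGroup.lift_x _ _ _

theorem ofRelGroup_q (hN : 0 < N) : ofRelGroup hN RelGroup.q = q N k :=
  RelGroup.lift_q _ _ _

theorem ofRelGroup_injective (hN : 0 < N) : Function.Injective (ofRelGroup (k := k) hN) := by
  refine (injective_iff_map_eq_one _).2 fun g hg => ?_
  obtain ⟨m, j, rfl⟩ := RelGroup.exists_eq_zpow_x_mul_zpow_q g
  rw [map_mul, map_zpow, map_zpow, ofRelGroup_x, ofRelGroup_q] at hg
  rw [RelGroup.zpow_x_mul_zpow_q, ← ofAdd_zero, EmbeddingLike.apply_eq_iff_eq,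
    QuotientAddGroup.eq_zero_iff]
  exact mem_zmultiples_of_zpow_xk_mul_zpow_q_eq_one hN hg

theorem ofRelGroup_surjective (hN : 0 < N) : Function.Surjective (ofRelGroup (k := k) hN) := by
  intro χ
  obtain ⟨m, j, rfl⟩ := exists_eq_zpow_xk_mul_zpow_q hN χ
  exact ⟨RelGroup.x ^ m * RelGroup.q ^ j,
    by rw [map_mul, map_zpow, map_zpow, ofRelGroup_x, ofRelGroup_q]⟩

def charEquiv (hN : 0 < N) :
    Multiplicative (RelGroup N k) ≃* contChars (Multiplicative (LamZN N k)) :=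
  .ofBijective (ofRelGroup hN) ⟨ofRelGroup_injective hN, ofRelGroup_surjective hN⟩

theorem charEquiv_symm_xk (hN : 0 < N) : (charEquiv hN).symm (xk N k) = RelGroup.x :=
  (MulEquiv.symm_apply_eq _).2 (ofRelGroup_x hN).symm

theorem charEquiv_symm_q (hN : 0 < N) : (charEquiv hN).symm (q N k) = RelGroup.q :=
  (MulEquiv.symm_apply_eq _).2 (ofRelGroup_q hN).symm

end LamZN

theorem statement9 (N : ℕ) (hN : 1 ≤ N) (k : ℤ) :
    ∃ xk q : contChars (Multiplicative (LamZN N k)),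
      (∀ (a : ℤ) (t : ℝ),
        ((xk : Multiplicative (LamZN N k) →* Circle)
            (Multiplicative.ofAdd (QuotientAddGroup.mk (a, t)))
          = Circle.exp (2 * Real.pi * ((k : ℝ) * t - (a : ℝ)) / (N : ℝ)))) ∧
      (∀ (a : ℤ) (t : ℝ),
        ((q : Multiplicative (LamZN N k) →* Circle)
            (Multiplicative.ofAdd (QuotientAddGroup.mk (a, t)))
          = Circle.exp (2 * Real.pi * t))) ∧
      xk ^ (N : ℕ) = q ^ k ∧
      ∃ e : RepRing (Multiplicative (LamZN N k)) ≃+*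
          (Polynomial (LaurentPolynomial ℤ) ⧸ relIdeal N k),
        e (MonoidAlgebra.of ℤ (contChars (Multiplicative (LamZN N k))) xk)
            = Ideal.Quotient.mk (relIdeal N k) Polynomial.X ∧
        e (MonoidAlgebra.of ℤ (contChars (Multiplicative (LamZN N k))) q)
            = Ideal.Quotient.mk (relIdeal N k) (Polynomial.C (LaurentPolynomial.T 1)) := by
  refine ⟨LamZN.xk N k, LamZN.q N k, LamZN.xk_apply, LamZN.q_apply, LamZN.xk_pow hN,
    (MonoidAlgebra.mapDomainRingEquiv ℤ (LamZN.charEquiv hN).symm).trans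
      (RelGroup.groupRingEquiv hN), ?_, ?_⟩
  · rw [RingEquiv.trans_apply, MonoidAlgebra.mapDomainRingEquiv_of, LamZN.charEquiv_symm_xk,
      RelGroup.groupRingEquiv_of_x]
  · rw [RingEquiv.trans_apply, MonoidAlgebra.mapDomainRingEquiv_of, LamZN.charEquiv_symm_q,
      RelGroup.groupRingEquiv_of_q]
end
end

section
/- Let H ≤ G be compact Lie groups, σ ∈ H torsion, λ a C_H(σ)-representation and χ an ℝ-character with λ(σ) = χ(1)·Id. Then the induced representation Ind^{Λ_G(σ)}_{Λ_H(σ)}(λ ⊙ χ) is isomorphic to (Ind^{C_G(σ)}_{C_H(σ)}λ) ⊙ χ as Λ_G(σ)-representations. -/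
/-!
STATEMENT 13: Let H ≤ G be compact Lie groups, σ ∈ H torsion, λ a C_H(σ)-representation
and χ an ℝ-character with λ(σ) = χ(1)·Id. Then
Ind^{Λ_G(σ)}_{Λ_H(σ)}(λ ⊙ χ) ≅ (Ind^{C_G(σ)}_{C_H(σ)} λ) ⊙ χ as Λ_G(σ)-representations.
Induced representations are modelled by their function-space model
{f : Γ → V | f(jb·a) = ρ(b)f(a)}; the isomorphism is a ℂ-linear equivalence T that is
equivariant: the right translation action of [c,t] ∈ Λ_G(σ) on the induced space
corresponds to χ(t) times the right translation by c ∈ C_G(σ).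
-/

noncomputable section

theorem self_mem_centralizer {G : Type} [Group G] (g : G) :
    g ∈ Subgroup.centralizer ({g} : Set G) := by
  rw [Subgroup.mem_centralizer_iff]
  rintro s hs
  rw [Set.mem_singleton_iff] at hs
  subst hs
  rfl

theorem zpowers_normal_of_central {H : Type*} [Group H] (z : H)
    (hz : ∀ x : H, Commute x z) : (Subgroup.zpowers z).Normal := by
  constructor
  intro n hn x
  obtain ⟨k, hk⟩ := Subgroup.mem_zpowers_iff.mp hn
  have hc : Commute x (z ^ k) := (hz x).zpow_right k
  rw [← hk, hc.eq, mul_inv_cancel_right]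
  exact Subgroup.zpow_mem_zpowers z k

variable {G : Type} [Group G]

def lamGen (g : G) (r : ℝ) :
    Subgroup.centralizer ({g} : Set G) × Multiplicative ℝ :=
  (⟨g, self_mem_centralizer g⟩, Multiplicative.ofAdd r)

def lamN (g : G) (r : ℝ) :
    Subgroup (Subgroup.centralizer ({g} : Set G) × Multiplicative ℝ) :=
  Subgroup.zpowers (lamGen g r)

theorem lamGen_central (g : G) (r : ℝ)
    (x : Subgroup.centralizer ({g} : Set G) × Multiplicative ℝ) :
    Commute x (lamGen g r) := by
  rcases x with ⟨⟨h, hh⟩, t⟩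
  have hcomm : g * h = h * g :=
    Subgroup.mem_centralizer_iff.mp hh g (Set.mem_singleton g)
  show _ = _
  refine Prod.ext (Subtype.ext ?_) (mul_comm _ _)
  exact hcomm.symm

instance (g : G) (r : ℝ) : (lamN g r).Normal :=
  zpowers_normal_of_central _ (lamGen_central g r)

/-- `Λ_G(g) = (C_G(g) × ℝ)/⟨(g,-1)⟩`. -/
abbrev Lam (g : G) : Type :=
  (Subgroup.centralizer ({g} : Set G) × Multiplicative ℝ) ⧸ lamN g (-1)

/-- The class of `(h, t)` in `Λ_G(g)`. -/
abbrev LamMk (g : G) (h : G) (hh : h ∈ Subgroup.centralizer ({g} : Set G)) (t : ℝ) :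
    Lam g :=
  QuotientGroup.mk (⟨h, hh⟩, Multiplicative.ofAdd t)


open scoped MatrixGroups

/-- The inclusion `C_H(σ) → C_G(σ)` for a subgroup `H = K ≤ G`. -/
def inclC (K : Subgroup G) (σ : G) (hσ : σ ∈ K) :
    Subgroup.centralizer ({(⟨σ, hσ⟩ : K)} : Set K) →* Subgroup.centralizer ({σ} : Set G) where
  toFun h := ⟨((h : K) : G), by
    rw [Subgroup.mem_centralizer_iff]
    rintro s hs
    rw [Set.mem_singleton_iff] at hs
    rw [hs]
    have h2 : (⟨σ, hσ⟩ : K) * (h : K) = (h : K) * ⟨σ, hσ⟩ :=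
      Subgroup.mem_centralizer_iff.mp h.2 _ (Set.mem_singleton _)
    simpa using congrArg Subtype.val h2⟩
  map_one' := rfl
  map_mul' _ _ := rfl

/-- The function-space model for the representation induced along `j : B → A` from the
representation `ρ` of `B`. -/
def IndSpace {A B : Type*} [Group A] [Group B] {n : ℕ} (j : B →* A)
    (ρ : B →* GL (Fin n) ℂ) : Submodule ℂ (A → (Fin n → ℂ)) where
  carrier := {f | ∀ (b : B) (a : A),
    f (j b * a) = Matrix.mulVec ((ρ b : GL (Fin n) ℂ) : Matrix (Fin n) (Fin n) ℂ) (f a)}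
  zero_mem' := by
    intro b a
    simp [Matrix.mulVec_zero]
  add_mem' := by
    intro f g hf hg b a
    simp [hf b a, hg b a, Matrix.mulVec_add]
  smul_mem' := by
    intro c f hf b a
    simp [hf b a, Matrix.mulVec_smul]


/-!
A function `f` in the induced representation of `Λ_G(σ)` satisfies `f [x, t] = χ(t) f [x, 0]`, so
it is determined by its restriction `x ↦ f [x, 0]`, which lies in the induced representation of
`C_G(σ)`. Conversely, `F` in the latter extends to `[x, t] ↦ χ(t) F x`; this is well defined on
the quotient by `⟨(σ, -1)⟩` exactly because `σ` is central in `C_G(σ)`, so that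
`F (x σ) = λ(σ) F x = χ(1) F x`. Under this identification, right translation by `[c, t]`
becomes `χ(t)` times right translation by `c`.
-/

theorem apply_mul_zpow_of_apply_mul {M U V : Type*} [Group M] [Group U] [MulAction U V]
    {F : M → V} {a : M} {u : U} (h : ∀ x, F (x * a) = u • F x) (x : M) (k : ℤ) :
    F (x * a ^ k) = u ^ k • F x := by
  have h' : ∀ y, F y = u⁻¹ • F (y * a) := fun y => by rw [h, inv_smul_smul]
  induction k using Int.induction_on with
  | zero => simp
  | succ k ih => rw [zpow_add_one, ← mul_assoc, h, ih, smul_smul, ← zpow_one_add, add_comm]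
  | pred k ih =>
    rw [h', mul_assoc, ← zpow_add_one, sub_add_cancel, ih, smul_smul, ← zpow_neg_one, ← zpow_add,
      neg_add_eq_sub]

section Extend

variable {U V : Type*} [Group U] [MulAction U V] {g : G} (χ : Multiplicative ℝ →* U)
  (F : Subgroup.centralizer ({g} : Set G) → V)
  (hF : ∀ x, F (x * ⟨g, self_mem_centralizer g⟩) = χ (.ofAdd 1) • F x)

def lamExtend : Lam g → V :=
  Quotient.lift (fun p => χ p.2 • F p.1) fun p q hpq => by
    obtain ⟨k, hk⟩ := Subgroup.mem_zpowers_iff.mp (QuotientGroup.leftRel_apply.mp hpq)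
    have hgen : lamGen g (-1) ^ k = (⟨g, self_mem_centralizer g⟩ ^ k, .ofAdd (-1) ^ k) := rfl
    have hχ : χ (.ofAdd (-1)) = (χ (.ofAdd 1))⁻¹ := by rw [ofAdd_neg, map_inv]
    rw [← mul_inv_cancel_left p q, ← hk, hgen, Prod.fst_mul, Prod.snd_mul,
      apply_mul_zpow_of_apply_mul hF, map_mul, map_zpow, hχ, inv_zpow, mul_smul, inv_smul_smul]

theorem lamExtend_mk (p : Subgroup.centralizer ({g} : Set G) × Multiplicative ℝ) :
    lamExtend χ F hF (QuotientGroup.mk p) = χ p.2 • F p.1 := rfl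

end Extend

section Induction

variable {K : Subgroup G} {σ : G} {hσ : σ ∈ K} {n : ℕ}
  {lam : Subgroup.centralizer ({(⟨σ, hσ⟩ : K)} : Set K) →* GL (Fin n) ℂ}
  {χ : Multiplicative ℝ →* ℂˣ}
  {j : Lam (G := K) ⟨σ, hσ⟩ →* Lam σ} {ρH : Lam (G := K) ⟨σ, hσ⟩ →* GL (Fin n) ℂ}

theorem apply_mk_of_apply_lamMk
    (hj : ∀ (h : K) (hh : h ∈ Subgroup.centralizer ({(⟨σ, hσ⟩ : K)} : Set K))
        (hh' : (h : G) ∈ Subgroup.centralizer ({σ} : Set G)) (t : ℝ),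
      j (LamMk (G := K) ⟨σ, hσ⟩ h hh t) = LamMk σ (h : G) hh' t)
    (p : Subgroup.centralizer ({(⟨σ, hσ⟩ : K)} : Set K) × Multiplicative ℝ) :
    j (QuotientGroup.mk p) = QuotientGroup.mk (inclC K σ hσ p.1, p.2) :=
  hj p.1 p.1.2 (inclC K σ hσ p.1).2 p.2.toAdd

theorem coe_apply_mk_of_coe_apply_lamMk
    (hρH : ∀ (h : K) (hh : h ∈ Subgroup.centralizer ({(⟨σ, hσ⟩ : K)} : Set K)) (t : ℝ),
      ((ρH (LamMk (G := K) ⟨σ, hσ⟩ h hh t) : GL (Fin n) ℂ) : Matrix (Fin n) (Fin n) ℂ)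
        = ((χ (Multiplicative.ofAdd t) : ℂˣ) : ℂ) •
            ((lam ⟨h, hh⟩ : GL (Fin n) ℂ) : Matrix (Fin n) (Fin n) ℂ))
    (p : Subgroup.centralizer ({(⟨σ, hσ⟩ : K)} : Set K) × Multiplicative ℝ) :
    (ρH (QuotientGroup.mk p) : Matrix (Fin n) (Fin n) ℂ) = (χ p.2 : ℂ) •
      (lam p.1 : Matrix (Fin n) (Fin n) ℂ) :=
  hρH p.1 p.1.2 p.2.toAdd

theorem apply_mk_eq_smul_apply_mk_one
    (hj : ∀ p, j (QuotientGroup.mk p) = QuotientGroup.mk (inclC K σ hσ p.1, p.2))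
    (hρ : ∀ p, (ρH (QuotientGroup.mk p) : Matrix (Fin n) (Fin n) ℂ) =
      (χ p.2 : ℂ) • (lam p.1 : Matrix (Fin n) (Fin n) ℂ))
    {f : Lam σ → Fin n → ℂ} (hf : f ∈ IndSpace j ρH)
    (x : Subgroup.centralizer ({σ} : Set G)) (t : Multiplicative ℝ) :
    f (QuotientGroup.mk (x, t)) = χ t • f (QuotientGroup.mk (x, 1)) := by
  have hmk : (QuotientGroup.mk (x, t) : Lam σ) =
      j (QuotientGroup.mk (1, t)) * QuotientGroup.mk (x, 1) := by
    rw [hj, ← QuotientGroup.mk_mul, map_one, Prod.mk_mul_mk, one_mul, mul_one]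
  rw [hmk, hf, hρ, map_one, Units.val_one, Matrix.smul_mulVec, Matrix.one_mulVec, Units.smul_def]

theorem restrict_mem_indSpace
    (hj : ∀ p, j (QuotientGroup.mk p) = QuotientGroup.mk (inclC K σ hσ p.1, p.2))
    (hρ : ∀ p, (ρH (QuotientGroup.mk p) : Matrix (Fin n) (Fin n) ℂ) =
      (χ p.2 : ℂ) • (lam p.1 : Matrix (Fin n) (Fin n) ℂ))
    {f : Lam σ → Fin n → ℂ} (hf : f ∈ IndSpace j ρH) :
    (fun x => f (QuotientGroup.mk (x, 1))) ∈ IndSpace (inclC K σ hσ) lam := by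
  intro b a
  have hmk : (QuotientGroup.mk (inclC K σ hσ b * a, 1) : Lam σ) =
      j (QuotientGroup.mk (b, 1)) * QuotientGroup.mk (a, 1) := by
    rw [hj, ← QuotientGroup.mk_mul, Prod.mk_mul_mk, one_mul]
  dsimp only
  rw [hmk, hf, hρ]
  simp only [map_one, Units.val_one, one_smul]

theorem apply_mul_self_eq_smul
    (hscalar : (lam ⟨⟨σ, hσ⟩, self_mem_centralizer _⟩ : Matrix (Fin n) (Fin n) ℂ) =
      (χ (.ofAdd 1) : ℂ) • (1 : Matrix (Fin n) (Fin n) ℂ))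
    {F : Subgroup.centralizer ({σ} : Set G) → Fin n → ℂ} (hF : F ∈ IndSpace (inclC K σ hσ) lam)
    (x : Subgroup.centralizer ({σ} : Set G)) :
    F (x * ⟨σ, self_mem_centralizer σ⟩) = χ (.ofAdd 1) • F x := by
  have hcomm : x * ⟨σ, self_mem_centralizer σ⟩ =
      inclC K σ hσ ⟨⟨σ, hσ⟩, self_mem_centralizer _⟩ * x :=
    Subtype.ext (Subgroup.mem_centralizer_iff.mp x.2 σ rfl).symm
  rw [hcomm, hF, hscalar, Matrix.smul_mulVec, Matrix.one_mulVec, Units.smul_def]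

theorem lamExtend_mem_indSpace
    (hj : ∀ p, j (QuotientGroup.mk p) = QuotientGroup.mk (inclC K σ hσ p.1, p.2))
    (hρ : ∀ p, (ρH (QuotientGroup.mk p) : Matrix (Fin n) (Fin n) ℂ) =
      (χ p.2 : ℂ) • (lam p.1 : Matrix (Fin n) (Fin n) ℂ))
    {F : Subgroup.centralizer ({σ} : Set G) → Fin n → ℂ} (hF : F ∈ IndSpace (inclC K σ hσ) lam)
    (hFσ : ∀ x, F (x * ⟨σ, self_mem_centralizer σ⟩) = χ (.ofAdd 1) • F x) :
    lamExtend χ F hFσ ∈ IndSpace j ρH := by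
  intro b a
  induction b using QuotientGroup.induction_on with | H p =>
  induction a using QuotientGroup.induction_on with | H q =>
  rw [hj, ← QuotientGroup.mk_mul, lamExtend_mk, lamExtend_mk, hρ]
  simp only [Prod.fst_mul, Prod.snd_mul, hF p.1, map_mul, Units.smul_def, Units.val_mul,
    Matrix.smul_mulVec, Matrix.mulVec_smul, smul_smul, mul_comm]

def indLamEquiv
    (hj : ∀ p, j (QuotientGroup.mk p) = QuotientGroup.mk (inclC K σ hσ p.1, p.2))
    (hρ : ∀ p, (ρH (QuotientGroup.mk p) : Matrix (Fin n) (Fin n) ℂ) =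
      (χ p.2 : ℂ) • (lam p.1 : Matrix (Fin n) (Fin n) ℂ))
    (hscalar : (lam ⟨⟨σ, hσ⟩, self_mem_centralizer _⟩ : Matrix (Fin n) (Fin n) ℂ) =
      (χ (.ofAdd 1) : ℂ) • (1 : Matrix (Fin n) (Fin n) ℂ)) :
    IndSpace j ρH ≃ₗ[ℂ] IndSpace (inclC K σ hσ) lam where
  toFun f := ⟨fun x => f.1 (QuotientGroup.mk (x, 1)), restrict_mem_indSpace hj hρ f.2⟩
  map_add' _ _ := rfl
  map_smul' _ _ := rfl
  invFun F := ⟨lamExtend χ F.1 (apply_mul_self_eq_smul hscalar F.2),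
    lamExtend_mem_indSpace hj hρ F.2 _⟩
  left_inv f := Subtype.ext <| funext fun y => by
    induction y using QuotientGroup.induction_on with
    | H p => exact (apply_mk_eq_smul_apply_mk_one hj hρ f.2 p.1 p.2).symm
  right_inv F := Subtype.ext <| funext fun x => by
    change χ 1 • F.1 x = F.1 x
    rw [map_one, one_smul]

end Induction

theorem statement13_general
    (K : Subgroup G) (σ : G) (hσ : σ ∈ K) (n : ℕ)
    (lam : Subgroup.centralizer ({(⟨σ, hσ⟩ : K)} : Set K) →* GL (Fin n) ℂ)
    (χ : Multiplicative ℝ →* ℂˣ)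
    (hscalar : ((lam ⟨⟨σ, hσ⟩, self_mem_centralizer _⟩ : GL (Fin n) ℂ) :
        Matrix (Fin n) (Fin n) ℂ)
      = ((χ (Multiplicative.ofAdd (1 : ℝ)) : ℂˣ) : ℂ) • (1 : Matrix (Fin n) (Fin n) ℂ))
    -- the canonical inclusion `j : Λ_H(σ) → Λ_G(σ)`
    (j : Lam (G := K) ⟨σ, hσ⟩ →* Lam σ)
    (hj : ∀ (h : K) (hh : h ∈ Subgroup.centralizer ({(⟨σ, hσ⟩ : K)} : Set K))
        (hh' : (h : G) ∈ Subgroup.centralizer ({σ} : Set G)) (t : ℝ),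
      j (LamMk (G := K) ⟨σ, hσ⟩ h hh t) = LamMk σ (h : G) hh' t)
    -- `ρH = λ ⊙ χ` on `Λ_H(σ)`
    (ρH : Lam (G := K) ⟨σ, hσ⟩ →* GL (Fin n) ℂ)
    (hρH : ∀ (h : K) (hh : h ∈ Subgroup.centralizer ({(⟨σ, hσ⟩ : K)} : Set K)) (t : ℝ),
      ((ρH (LamMk (G := K) ⟨σ, hσ⟩ h hh t) : GL (Fin n) ℂ) : Matrix (Fin n) (Fin n) ℂ)
        = ((χ (Multiplicative.ofAdd t) : ℂˣ) : ℂ) •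
            ((lam ⟨h, hh⟩ : GL (Fin n) ℂ) : Matrix (Fin n) (Fin n) ℂ)) :
    -- `Ind^{Λ_G(σ)}_{Λ_H(σ)}(λ ⊙ χ) ≅ (Ind^{C_G(σ)}_{C_H(σ)} λ) ⊙ χ`
    ∃ T : IndSpace j ρH ≃ₗ[ℂ] IndSpace (inclC K σ hσ) lam,
      ∀ (f g : IndSpace j ρH) (c : G) (hc : c ∈ Subgroup.centralizer ({σ} : Set G)) (t : ℝ),
        (∀ y : Lam σ, (g : Lam σ → (Fin n → ℂ)) y
            = (f : Lam σ → (Fin n → ℂ)) (y * LamMk σ c hc t)) →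
        ∀ x : Subgroup.centralizer ({σ} : Set G),
          (T g : Subgroup.centralizer ({σ} : Set G) → (Fin n → ℂ)) x
            = ((χ (Multiplicative.ofAdd t) : ℂˣ) : ℂ) •
                (T f : Subgroup.centralizer ({σ} : Set G) → (Fin n → ℂ)) (x * ⟨c, hc⟩) := by
  have hj' := apply_mk_of_apply_lamMk hj
  have hρ' := coe_apply_mk_of_coe_apply_lamMk hρH
  refine ⟨indLamEquiv hj' hρ' hscalar, fun f g c hc t hgf x => ?_⟩
  calc g.1 (QuotientGroup.mk (x, 1))
      = f.1 (QuotientGroup.mk (x, 1) * LamMk σ c hc t) := hgf _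
    _ = f.1 (QuotientGroup.mk (x * ⟨c, hc⟩, .ofAdd t)) := by
      rw [← QuotientGroup.mk_mul, Prod.mk_mul_mk, one_mul]
    _ = χ (.ofAdd t) • f.1 (QuotientGroup.mk (x * ⟨c, hc⟩, 1)) :=
      apply_mk_eq_smul_apply_mk_one hj' hρ' f.2 _ _

theorem statement13 [TopologicalSpace G] [IsTopologicalGroup G] [CompactSpace G]
    (K : Subgroup G) (σ : G) (hσ : σ ∈ K) (hfin : IsOfFinOrder σ) (n : ℕ)
    -- finite index hypothesis `[C_G(σ) : C_H(σ)] < ∞`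
    (hfi : (inclC K σ hσ).range.index ≠ 0)
    (lam : Subgroup.centralizer ({(⟨σ, hσ⟩ : K)} : Set K) →* GL (Fin n) ℂ)
    (χ : Multiplicative ℝ →* ℂˣ)
    (hscalar : ((lam ⟨⟨σ, hσ⟩, self_mem_centralizer _⟩ : GL (Fin n) ℂ) :
        Matrix (Fin n) (Fin n) ℂ)
      = ((χ (Multiplicative.ofAdd (1 : ℝ)) : ℂˣ) : ℂ) • (1 : Matrix (Fin n) (Fin n) ℂ))
    -- the canonical inclusion `j : Λ_H(σ) → Λ_G(σ)`
    (j : Lam (G := K) ⟨σ, hσ⟩ →* Lam σ)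
    (hj : ∀ (h : K) (hh : h ∈ Subgroup.centralizer ({(⟨σ, hσ⟩ : K)} : Set K))
        (hh' : (h : G) ∈ Subgroup.centralizer ({σ} : Set G)) (t : ℝ),
      j (LamMk (G := K) ⟨σ, hσ⟩ h hh t) = LamMk σ (h : G) hh' t)
    -- `ρH = λ ⊙ χ` on `Λ_H(σ)`
    (ρH : Lam (G := K) ⟨σ, hσ⟩ →* GL (Fin n) ℂ)
    (hρH : ∀ (h : K) (hh : h ∈ Subgroup.centralizer ({(⟨σ, hσ⟩ : K)} : Set K)) (t : ℝ),
      ((ρH (LamMk (G := K) ⟨σ, hσ⟩ h hh t) : GL (Fin n) ℂ) : Matrix (Fin n) (Fin n) ℂ)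
        = ((χ (Multiplicative.ofAdd t) : ℂˣ) : ℂ) •
            ((lam ⟨h, hh⟩ : GL (Fin n) ℂ) : Matrix (Fin n) (Fin n) ℂ)) :
    -- `Ind^{Λ_G(σ)}_{Λ_H(σ)}(λ ⊙ χ) ≅ (Ind^{C_G(σ)}_{C_H(σ)} λ) ⊙ χ`
    ∃ T : IndSpace j ρH ≃ₗ[ℂ] IndSpace (inclC K σ hσ) lam,
      ∀ (f g : IndSpace j ρH) (c : G) (hc : c ∈ Subgroup.centralizer ({σ} : Set G)) (t : ℝ),
        (∀ y : Lam σ, (g : Lam σ → (Fin n → ℂ)) y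
            = (f : Lam σ → (Fin n → ℂ)) (y * LamMk σ c hc t)) →
        ∀ x : Subgroup.centralizer ({σ} : Set G),
          (T g : Subgroup.centralizer ({σ} : Set G) → (Fin n → ℂ)) x
            = ((χ (Multiplicative.ofAdd t) : ℂˣ) : ℂ) •
                (T f : Subgroup.centralizer ({σ} : Set G) → (Fin n → ℂ)) (x * ⟨c, hc⟩) :=
  statement13_general K σ hσ n lam χ hscalar j hj ρH hρH
end
end
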